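/- Suppose every quasi-component of X is an intersection of countably many clopen sets. Then Bob has a winning strategy in G₁(C_O, C_O) on X if and only if X is a union of countably many quasi-components. -/

import Mathlib

open Set

section Defs

variable (X : Type*) [TopologicalSpace X]

/-- A clopen cover of `X`. -/
def IsClopenCover (U : Set (Set X)) : Prop :=
  (∀ V ∈ U, IsClopen V) ∧ ⋃₀ U = (univ : Set X)

/-- An open cover of `X`. -/
def IsOpenCover (U : Set (Set X)) : Prop :=
  (∀ V ∈ U, IsOpen V) ∧ ⋃₀ U = (univ : Set X)

/-- The selection principle `S₁(C_O, C_O)` (mildly Rothberger). -/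
def S1CC : Prop :=
  ∀ U : ℕ → Set (Set X), (∀ n, IsClopenCover X (U n)) →
    ∃ V : ℕ → Set X, (∀ n, V n ∈ U n) ∧ (⋃ n, V n) = (univ : Set X)

/-- The Rothberger selection principle `S₁(O, O)`. -/
def S1OO : Prop :=
  ∀ U : ℕ → Set (Set X), (∀ n, IsOpenCover X (U n)) →
    ∃ V : ℕ → Set X, (∀ n, V n ∈ U n) ∧ (⋃ n, V n) = (univ : Set X)

end Defs

/-- History of the first `n` moves of a play `b`. -/
def hist {α : Type*} (b : ℕ → α) (n : ℕ) : List α := List.ofFn (fun i : Fin n => b i)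

section Games

variable (X : Type*) [TopologicalSpace X]

/-- Alice has a winning strategy in `G₁(C_O, C_O)`. -/
def AliceWinsG1CC : Prop :=
  ∃ σ : List (Set X) → Set (Set X),
    (∀ h, IsClopenCover X (σ h)) ∧
    ∀ b : ℕ → Set X, (∀ n, b n ∈ σ (hist b n)) → (⋃ n, b n) ≠ (univ : Set X)

/-- Bob has a winning strategy in `G₁(C_O, C_O)`. -/
def BobWinsG1CC : Prop :=
  ∃ τ : List (Set (Set X)) → Set X,
    ∀ U : ℕ → Set (Set X), (∀ n, IsClopenCover X (U n)) →
      (∀ n, τ (hist U (n+1)) ∈ U n) ∧ (⋃ n, τ (hist U (n+1))) = (univ : Set X)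

/-- Alice has a winning strategy in the Rothberger game `G₁(O, O)`. -/
def AliceWinsG1OO : Prop :=
  ∃ σ : List (Set X) → Set (Set X),
    (∀ h, IsOpenCover X (σ h)) ∧
    ∀ b : ℕ → Set X, (∀ n, b n ∈ σ (hist b n)) → (⋃ n, b n) ≠ (univ : Set X)

/-- Bob has a winning strategy in the Rothberger game `G₁(O, O)`. -/
def BobWinsG1OO : Prop :=
  ∃ τ : List (Set (Set X)) → Set X,
    ∀ U : ℕ → Set (Set X), (∀ n, IsOpenCover X (U n)) →
      (∀ n, τ (hist U (n+1)) ∈ U n) ∧ (⋃ n, τ (hist U (n+1))) = (univ : Set X)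

/-- The quasi-component of a point: the intersection of all clopen sets containing it. -/
def quasiComponent (x : X) : Set X := ⋂₀ {U : Set X | IsClopen U ∧ x ∈ U}

/-- Alice has a winning strategy in the point-clopen game `PC(X)`. -/
def AliceWinsPC : Prop :=
  ∃ φ : List (Set X) → X,
    ∀ b : ℕ → Set X, (∀ n, IsClopen (b n) ∧ φ (hist b n) ∈ b n) →
      (⋃ n, b n) = (univ : Set X)

/-- Bob has a winning strategy in the point-clopen game `PC(X)`. -/
def BobWinsPC : Prop :=
  ∃ ψ : List X → Set X,
    ∀ x : ℕ → X,
      (∀ n, IsClopen (ψ (hist x (n+1))) ∧ x n ∈ ψ (hist x (n+1))) ∧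
      (⋃ n, ψ (hist x (n+1))) ≠ (univ : Set X)

/-- Alice has a winning strategy in the point-open game `PO(X)`. -/
def AliceWinsPO : Prop :=
  ∃ φ : List (Set X) → X,
    ∀ b : ℕ → Set X, (∀ n, IsOpen (b n) ∧ φ (hist b n) ∈ b n) →
      (⋃ n, b n) = (univ : Set X)

/-- Bob has a winning strategy in the point-open game `PO(X)`. -/
def BobWinsPO : Prop :=
  ∃ ψ : List X → Set X,
    ∀ x : ℕ → X,
      (∀ n, IsOpen (ψ (hist x (n+1))) ∧ x n ∈ ψ (hist x (n+1))) ∧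
      (⋃ n, ψ (hist x (n+1))) ≠ (univ : Set X)

/-- Alice has a winning strategy in the quasi-component-clopen game `QC(X)`. -/
def AliceWinsQC : Prop :=
  ∃ φ : List (Set X) → Set X,
    (∀ h, ∃ x : X, φ h = quasiComponent X x) ∧
    ∀ b : ℕ → Set X, (∀ n, IsClopen (b n) ∧ φ (hist b n) ⊆ b n) →
      (⋃ n, b n) = (univ : Set X)

/-- Bob has a winning strategy in the quasi-component-clopen game `QC(X)`. -/
def BobWinsQC : Prop :=
  ∃ ψ : List (Set X) → Set X,
    ∀ A : ℕ → Set X, (∀ n, ∃ x : X, A n = quasiComponent X x) →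
      (∀ n, IsClopen (ψ (hist A (n+1))) ∧ A n ⊆ ψ (hist A (n+1))) ∧
      (⋃ n, ψ (hist A (n+1))) ≠ (univ : Set X)

end Games

/-!
Bob wins by answering the `n`-th cover with a member containing `f n`: it is clopen, so it contains
the whole quasi-component of `f n`.

Conversely, let `τ` be a winning strategy for Bob. At every position there is a point `x` such that
Alice can force Bob's next answer into any prescribed clopen neighbourhood of the quasi-component
`Q x`: otherwise the neighbourhoods witnessing the failure at each `x` form a clopen cover, and
`τ`'s answer to it is one of them. Writing each `Q x` as a countable intersection of clopen sets
turns this into a countably branching tree of positions. The quasi-components of the countably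
many points attached to its nodes cover `X`, for if `z` avoided all of them, Alice could follow a
branch along which every answer of `τ` misses `z`.
-/

theorem hist_succ {α : Type*} (c : ℕ → α) (n : ℕ) : hist c (n + 1) = hist c n ++ [c n] :=
  List.ofFn_succ_last

theorem hist_comp {α β : Type*} (f : α → β) (c : ℕ → α) (n : ℕ) :
    hist (f ∘ c) n = (hist c n).map f :=
  List.map_ofFn.symm

theorem hist_getD {α : Type*} (L : List α) (d : α) : hist (fun n => L.getD n d) L.length = L :=
  List.ext_getElem (by simp [hist]) fun _ _ _ => by simp [hist]

section QuasiComponent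

variable {X : Type*} [TopologicalSpace X]

theorem mem_quasiComponent_self (x : X) : x ∈ quasiComponent X x := fun _ hU => hU.2

theorem quasiComponent_subset_of_isClopen {x : X} {W : Set X} (hW : IsClopen W) (hx : x ∈ W) :
    quasiComponent X x ⊆ W :=
  sInter_subset_of_mem ⟨hW, hx⟩

end QuasiComponent

section G1CC

variable {X : Type*} [TopologicalSpace X]

variable (X) in
abbrev ClopenCover : Type _ := {C : Set (Set X) // IsClopenCover X C}

theorem IsClopenCover.exists_mem {C : Set (Set X)} (hC : IsClopenCover X C) (x : X) :
    ∃ W ∈ C, x ∈ W :=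
  mem_sUnion.1 (hC.2 ▸ mem_univ x)

def IsBobWinningG1CC (τ : List (Set (Set X)) → Set X) : Prop :=
  ∀ U : ℕ → Set (Set X), (∀ n, IsClopenCover X (U n)) →
    (∀ n, τ (hist U (n + 1)) ∈ U n) ∧ (⋃ n, τ (hist U (n + 1))) = univ

namespace IsBobWinningG1CC

variable {τ : List (Set (Set X)) → Set X}

theorem move_mem (hτ : IsBobWinningG1CC τ) (L : List (ClopenCover X)) (C : ClopenCover X) :
    τ ((L ++ [C]).map Subtype.val) ∈ C.1 := by
  let U : ℕ → ClopenCover X := fun n => (L ++ [C]).getD n C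
  have hU := (hτ (Subtype.val ∘ U) fun n => (U n).2).1 L.length
  rw [hist_comp, show L.length + 1 = (L ++ [C]).length by simp, hist_getD] at hU
  simpa [U] using hU

theorem exists_forall_isClopen_subset (hτ : IsBobWinningG1CC τ) (L : List (ClopenCover X)) :
    ∃ x, ∀ W, IsClopen W → quasiComponent X x ⊆ W →
      ∃ C : ClopenCover X, τ ((L ++ [C]).map Subtype.val) ⊆ W := by
  by_contra! h
  choose W hW hQW hτW using h
  let C : ClopenCover X := ⟨range W, forall_mem_range.2 hW,
    eq_univ_of_forall fun x => ⟨W x, mem_range_self x, hQW x (mem_quasiComponent_self x)⟩⟩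
  obtain ⟨x, hx⟩ := hτ.move_mem L C
  exact hτW x C hx.ge

-- `coverTree cov (k :: s)` extends `coverTree cov s` by Alice's move `cov _ k`.
def coverTree (cov : List (ClopenCover X) → ℕ → ClopenCover X) (s : List ℕ) :
    List (ClopenCover X) :=
  s.foldr (fun k L => L ++ [cov L k]) []

theorem iUnion_quasiComponent_coverTree_eq_univ (hτ : IsBobWinningG1CC τ) {V : X → ℕ → Set X}
    (hV : ∀ x, quasiComponent X x = ⋂ k, V x k) {pick : List (ClopenCover X) → X}
    {cov : List (ClopenCover X) → ℕ → ClopenCover X}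
    (hcov : ∀ L k, τ ((L ++ [cov L k]).map Subtype.val) ⊆ V (pick L) k) :
    ⋃ s, quasiComponent X (pick (coverTree cov s)) = univ := by
  refine eq_univ_of_forall fun z => by_contra fun hz => ?_
  have hk : ∀ s, ∃ k, z ∉ V (pick (coverTree cov s)) k := fun s => by
    by_contra! h
    exact hz (mem_iUnion.2 ⟨s, hV _ ▸ mem_iInter.2 h⟩)
  choose kk hkk using hk
  let b : ℕ → List ℕ := fun n => n.rec [] fun _ s => kk s :: s
  let U : ℕ → ClopenCover X := fun n => cov (coverTree cov (b n)) (kk (b n))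
  have hhist : ∀ n, hist (Subtype.val ∘ U) n = (coverTree cov (b n)).map Subtype.val := by
    intro n
    induction n with
    | zero => rfl
    | succ n ih => rw [hist_succ, ih]; simp [coverTree, b, U]
  obtain ⟨n, hn⟩ := mem_iUnion.1 ((hτ (Subtype.val ∘ U) fun n => (U n).2).2 ▸ mem_univ z)
  rw [hhist] at hn
  exact hkk (b n) (hcov _ _ hn)

theorem exists_iUnion_quasiComponent_eq_univ (hτ : IsBobWinningG1CC τ) {V : X → ℕ → Set X}
    (hVclopen : ∀ x k, IsClopen (V x k)) (hV : ∀ x, quasiComponent X x = ⋂ k, V x k) :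
    ∃ f : ℕ → X, ⋃ n, quasiComponent X (f n) = univ := by
  have hstep : ∀ L, ∃ x, ∀ k, ∃ C : ClopenCover X, τ ((L ++ [C]).map Subtype.val) ⊆ V x k :=
    fun L =>
      let ⟨x, hx⟩ := hτ.exists_forall_isClopen_subset L
      ⟨x, fun k => hx _ (hVclopen x k) (hV x ▸ iInter_subset _ k)⟩
  choose pick cov hcov using hstep
  refine ⟨fun n => pick (coverTree cov (Denumerable.ofNat (List ℕ) n)), ?_⟩
  rw [← hτ.iUnion_quasiComponent_coverTree_eq_univ hV hcov]
  exact (Function.LeftInverse.surjective (Denumerable.ofNat_encode (α := List ℕ))).iUnion_comp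
    fun s => quasiComponent X (pick (coverTree cov s))

end IsBobWinningG1CC

theorem bobWinsG1CC_of_iUnion_quasiComponent_eq_univ (f : ℕ → X)
    (hf : ⋃ n, quasiComponent X (f n) = univ) : BobWinsG1CC X := by
  let τ : List (Set (Set X)) → Set X := fun L =>
    Classical.epsilon fun W => W ∈ L.getLastD ∅ ∧ f (L.length - 1) ∈ W
  refine ⟨τ, fun U hU => ?_⟩
  have hmove : ∀ n, τ (hist U (n + 1)) ∈ U n ∧ f n ∈ τ (hist U (n + 1)) := fun n => by
    have hlast : (hist U (n + 1)).getLastD ∅ = U n := by simp [hist_succ]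
    have hlen : (hist U (n + 1)).length - 1 = n := by simp [hist]
    simp only [τ, hlast, hlen]
    exact Classical.epsilon_spec ((hU n).exists_mem (f n))
  refine ⟨fun n => (hmove n).1, eq_univ_of_forall fun z => ?_⟩
  obtain ⟨n, hn⟩ := mem_iUnion.1 (hf ▸ mem_univ z)
  exact mem_iUnion.2 ⟨n, quasiComponent_subset_of_isClopen ((hU n).1 _ (hmove n).1) (hmove n).2 hn⟩

end G1CC

/-- If every quasi-component of `X` is an intersection of countably many clopen
sets, then Bob has a winning strategy in `G₁(C_O, C_O)` iff `X` is a union of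
countably many quasi-components. -/
theorem stmt12 (X : Type*) [TopologicalSpace X]
    (hG : ∀ x : X, ∃ V : ℕ → Set X, (∀ n, IsClopen (V n)) ∧
      quasiComponent X x = ⋂ n, V n) :
    BobWinsG1CC X ↔
      ∃ f : ℕ → X, (⋃ n, quasiComponent X (f n)) = (Set.univ : Set X) := by
  choose V hVclopen hV using hG
  exact ⟨fun ⟨_, hτ⟩ => IsBobWinningG1CC.exists_iUnion_quasiComponent_eq_univ hτ hVclopen hV,
    fun ⟨f, hf⟩ => bobWinsG1CC_of_iUnion_quasiComponent_eq_univ f hf⟩
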